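/- Let d ≥ 2, let A be a real d×d matrix, r ≥ 0, let μ be a Borel probability measure on [−r,0], and let x : [−r,∞) → ℝ^d be continuous, differentiable on (0,∞), with x(t) ∈ Δ_d for all t ≥ −r, satisfying the distributed-delay replicator equation x_i′(t) = x_i(t)·[(A x̄(t))_i − ⟨x(t), A x̄(t)⟩] for all t > 0 and all i ∈ {1,…,d}, where x̄(t) = ∫_{−r}^0 x(t+s) dμ(s). Assume there exists ε > 0 such that x_i(t) ≥ ε for all t ≥ 0 and all i, and assume p ∈ Δ_d satisfies p_i > 0 for all i and (Ap)_1 = (Ap)_2 = ⋯ = (Ap)_d, and that p is the unique such point of Δ_d. Then for every i, lim_{T→∞} (1/T)∫₀^T x_i(t) dt = p_i. -/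

import Mathlib

/-!
Dividing the equation by `xᵢ` and integrating gives
`log xᵢ(T) - log xᵢ(0) = ∫₀ᵀ ((A x̄)ᵢ - ⟨x, A x̄⟩)`. Subtracting this identity for two indices
cancels the mean payoff, and the left-hand sides stay bounded because `ε ≤ xᵢ ≤ 1`; hence
`∫₀ᵀ ((A x̄)ᵢ - (A x̄)ⱼ) = O(1)`. Replacing `x̄` by `x` costs only `O(r)`: by Fubini,
`∫₀ᵀ x̄` is a `μ`-average of the shifted integrals `∫₀ᵀ x(t + s) dt`, each within `2|s|` of
`∫₀ᵀ x`. So the time averages `Y(T)` satisfy `(A Y(T))ᵢ - (A Y(T))ⱼ = O(1/T)`. They stay in the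
compact set `{q ∈ Δ_d | ε ≤ q}`, where every cluster point is an interior rest point, i.e. `p`.
-/

open Filter MeasureTheory Set Topology Matrix intervalIntegral

section Averages

variable {E : Type*} [NormedAddCommGroup E] [NormedSpace ℝ E]

noncomputable def timeAverage (x : ℝ → E) (T : ℝ) : E :=
  T⁻¹ • ∫ t in (0:ℝ)..T, x t

noncomputable def delayAverage (μ : Measure ℝ) (r : ℝ) (u : ℝ → E) (t : ℝ) : E :=
  ∫ s in Icc (-r) 0, u (t + s) ∂μ

theorem timeAverage_mem [CompleteSpace E] {K : Set E} (hK : Convex ℝ K) (hKc : IsClosed K)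
    {x : ℝ → E} {T : ℝ} (hT : 0 < T) (hx : IntervalIntegrable x volume 0 T)
    (hxK : ∀ t ∈ Ioc 0 T, x t ∈ K) : timeAverage x T ∈ K := by
  rw [show timeAverage x T = ⨍ t in Ioc 0 T, x t by
    rw [timeAverage, ← uIoc_of_le hT.le, interval_average_eq, sub_zero]]
  exact hK.set_average_mem hKc (by simp [hT]) (by simp)
    (ae_restrict_of_forall_mem measurableSet_Ioc hxK) hx.1

theorem continuousOn_delayAverage {μ : Measure ℝ} [IsFiniteMeasure μ] {u : ℝ → E} {r M : ℝ}
    (hu : ContinuousOn u (Ici (-r))) (hM : ∀ t ∈ Ici (-r), ‖u t‖ ≤ M) :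
    ContinuousOn (delayAverage μ r u) (Ici 0) := by
  have hmaps : ∀ t ∈ Ici (0:ℝ), ∀ s ∈ Icc (-r) 0, t + s ∈ Ici (-r) := fun t ht s hs =>
    mem_Ici.2 (by linarith [mem_Ici.1 ht, hs.1])
  refine continuousOn_of_dominated (bound := fun _ => M) (fun t ht => ?_) (fun t ht => ?_)
    (integrable_const M) ?_
  · exact (hu.comp (by fun_prop) (hmaps t ht)).aestronglyMeasurable measurableSet_Icc
  · filter_upwards [ae_restrict_mem measurableSet_Icc] with s hs using hM _ (hmaps t ht s hs)
  · filter_upwards [ae_restrict_mem measurableSet_Icc] with s hs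
    exact hu.comp (by fun_prop) fun t ht => hmaps t ht s hs

theorem norm_integral_comp_add_right_sub_le {u : ℝ → E} {s M T : ℝ} (hs : s ≤ 0) (hT : 0 ≤ T)
    (hu : ContinuousOn u (Ici s)) (hM : ∀ t ∈ Ici s, ‖u t‖ ≤ M) :
    ‖(∫ t in (0:ℝ)..T, u (t + s)) - ∫ t in (0:ℝ)..T, u t‖ ≤ 2 * M * |s| := by
  have hint : ∀ a b, s ≤ a → s ≤ b → IntervalIntegrable u volume a b := fun a b ha hb =>
    (hu.mono fun t ht => (le_min ha hb).trans ht.1).intervalIntegrable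
  have hbound : ∀ a b, s ≤ a → s ≤ b → ‖∫ t in a..b, u t‖ ≤ M * |b - a| := fun a b ha hb =>
    norm_integral_le_of_norm_le_const fun t ht => hM t ((le_min ha hb).trans ht.1.le)
  rw [integral_comp_add_right, zero_add, integral_interval_sub_interval_comm
    (hint _ _ le_rfl (by linarith)) (hint _ _ hs (by linarith)) (hint _ _ le_rfl hs)]
  calc ‖(∫ t in s..0, u t) - ∫ t in T + s..T, u t‖
      ≤ ‖∫ t in s..0, u t‖ + ‖∫ t in T + s..T, u t‖ := norm_sub_le _ _
    _ ≤ M * |0 - s| + M * |T - (T + s)| :=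
        add_le_add (hbound _ _ le_rfl hs) (hbound _ _ (by linarith) (by linarith))
    _ = 2 * M * |s| := by rw [zero_sub, abs_neg, sub_add_cancel_left, abs_neg]; ring

theorem norm_integral_delayAverage_sub_le [CompleteSpace E] {μ : Measure ℝ} {u : ℝ → E}
    {r M T : ℝ} (hμ : μ (Icc (-r) 0) = 1) (hu : ContinuousOn u (Ici (-r)))
    (hM : ∀ t ∈ Ici (-r), ‖u t‖ ≤ M) (hT : 0 ≤ T) :
    ‖(∫ t in (0:ℝ)..T, delayAverage μ r u t) - ∫ t in (0:ℝ)..T, u t‖ ≤ 2 * M * r := by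
  have : IsProbabilityMeasure (μ.restrict (Icc (-r) 0)) := ⟨by simp [hμ]⟩
  have hF : Integrable (Function.uncurry fun t s => u (t + s))
      ((volume.restrict (Ioc 0 T)).prod (μ.restrict (Icc (-r) 0))) := by
    rw [← Measure.restrict_restrict_of_subset (subset_refl (Icc (-r) 0)), Measure.prod_restrict]
    refine (ContinuousOn.integrableOn_compact (isCompact_Icc.prod isCompact_Icc) ?_).mono_set
      (prod_mono Ioc_subset_Icc_self subset_rfl)
    refine hu.comp (continuous_fst.add continuous_snd).continuousOn fun z hz => ?_
    simp only [mem_prod, mem_Icc, mem_Ici] at hz ⊢; linarith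
  have hswap : ∫ t in (0:ℝ)..T, delayAverage μ r u t
      = ∫ s in Icc (-r) 0, (∫ t in (0:ℝ)..T, u (t + s)) ∂μ := by
    simp only [delayAverage, integral_of_le hT]
    exact integral_integral_swap hF
  have hconst : ∫ t in (0:ℝ)..T, u t = ∫ _s in Icc (-r) 0, (∫ t in (0:ℝ)..T, u t) ∂μ := by simp
  have hM0 : 0 ≤ M := (norm_nonneg _).trans (hM (-r) (mem_Ici.2 le_rfl))
  rw [hswap, hconst, ← integral_sub _ (integrable_const _)]
  · refine (MeasureTheory.norm_integral_le_of_norm_le_const (C := 2 * M * r) ?_).trans (by simp)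
    filter_upwards [ae_restrict_mem measurableSet_Icc] with s hs
    refine (norm_integral_comp_add_right_sub_le hs.2 hT (hu.mono (Ici_subset_Ici.2 hs.1))
      fun t ht => hM t (Ici_subset_Ici.2 hs.1 ht)).trans ?_
    gcongr
    exact abs_le.2 ⟨by linarith [hs.1, hs.2], by linarith [hs.1, hs.2]⟩
  · simpa only [integral_of_le hT, Function.uncurry_apply_pair] using hF.integral_prod_right

end Averages

theorem integral_eq_log_sub_log_of_hasDerivAt_mul {f g : ℝ → ℝ} {a b : ℝ} (hab : a ≤ b)
    (hf : ContinuousOn f (Icc a b)) (hpos : ∀ t ∈ Icc a b, 0 < f t)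
    (hderiv : ∀ t ∈ Ioo a b, HasDerivAt f (f t * g t) t)
    (hg : IntervalIntegrable g volume a b) :
    ∫ t in a..b, g t = Real.log (f b) - Real.log (f a) := by
  refine integral_eq_sub_of_hasDerivAt_of_le hab (hf.log fun t ht => (hpos t ht).ne')
    (fun t ht => ?_) hg
  have hft := (hpos t (Ioo_subset_Icc_self ht)).ne'
  simpa only [mul_div_cancel_left₀ _ hft] using (hderiv t ht).log hft

section Replicator

variable {ι : Type*} [Fintype ι]

noncomputable def payoffGap (A : Matrix ι ι ℝ) (i j : ι) : (ι → ℝ) →L[ℝ] ℝ :=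
  LinearMap.toContinuousLinearMap
    ((LinearMap.proj (R := ℝ) (φ := fun _ : ι => ℝ) i - LinearMap.proj j) ∘ₗ A.mulVecLin)

@[simp]
theorem payoffGap_apply (A : Matrix ι ι ℝ) (i j : ι) (z : ι → ℝ) :
    payoffGap A i j z = (A *ᵥ z) i - (A *ᵥ z) j := by
  simp [payoffGap]

theorem tendsto_of_tendsto_payoffGap {α : Type*} {l : Filter α} {A : Matrix ι ι ℝ}
    {Y : α → ι → ℝ} {ε : ℝ} {p : ι → ℝ} (hε : 0 < ε)
    (hY : ∀ᶠ a in l, Y a ∈ stdSimplex ℝ ι ∩ univ.pi fun _ => Ici ε)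
    (hgap : ∀ i j, Tendsto (fun a => payoffGap A i j (Y a)) l (𝓝 0))
    (huniq : ∀ q ∈ stdSimplex ℝ ι,
      (∀ i, 0 < q i) → (∀ i j, (A *ᵥ q) i = (A *ᵥ q) j) → q = p) :
    Tendsto Y l (𝓝 p) := by
  have hK : IsCompact (stdSimplex ℝ ι ∩ univ.pi fun _ => Ici ε) :=
    (isCompact_stdSimplex ℝ ι).inter_right (isClosed_set_pi fun _ _ => isClosed_Ici)
  refine hK.tendsto_nhds_of_unique_mapClusterPt hY fun q hq hq_clus =>
    huniq q hq.1 (fun i => hε.trans_le (hq.2 i (mem_univ i))) fun i j => ?_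
  have hclus : MapClusterPt (payoffGap A i j q) l (payoffGap A i j ∘ Y) :=
    hq_clus.tendsto_comp ((payoffGap A i j).continuous.tendsto q)
  have := eq_of_nhds_neBot (ClusterPt.mono hclus (hgap i j)).neBot
  rwa [payoffGap_apply, sub_eq_zero] at this

def SolvesDelayReplicator (A : Matrix ι ι ℝ) (μ : Measure ℝ) (r : ℝ) (x : ℝ → ι → ℝ) : Prop :=
  ∀ t, 0 < t → HasDerivAt x
    (fun i => x t i * ((A *ᵥ delayAverage μ r x t) i - x t ⬝ᵥ A *ᵥ delayAverage μ r x t)) t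

theorem abs_integral_payoffGap_delayAverage_le {A : Matrix ι ι ℝ} {μ : Measure ℝ}
    [IsFiniteMeasure μ] {r ε T : ℝ} {x : ℝ → ι → ℝ} (hr : 0 ≤ r)
    (hxcont : ContinuousOn x (Ici (-r))) (hxs : ∀ t : ℝ, -r ≤ t → x t ∈ stdSimplex ℝ ι)
    (hode : SolvesDelayReplicator A μ r x) (hε : 0 < ε) (hint : ∀ t : ℝ, 0 ≤ t → ∀ i, ε ≤ x t i)
    (hT : 0 ≤ T) (i j : ι) :
    |∫ t in (0:ℝ)..T, payoffGap A i j (delayAverage μ r x t)| ≤ -2 * Real.log ε := by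
  have hx : ContinuousOn x (Ici 0) := hxcont.mono (Ici_subset_Ici.2 (neg_nonpos.2 hr))
  have hxbar : ContinuousOn (delayAverage μ r x) (Ici 0) := continuousOn_delayAverage hxcont
    fun t ht => mem_closedBall_zero_iff.1 (stdSimplex_subset_closedBall (hxs t ht))
  set g : ι → ℝ → ℝ := fun m t =>
    (A *ᵥ delayAverage μ r x t) m - x t ⬝ᵥ A *ᵥ delayAverage μ r x t
  have hg : ∀ m, IntervalIntegrable (g m) volume 0 T := fun m =>
    (ContinuousOn.mono (by fun_prop) Icc_subset_Ici_self).intervalIntegrable_of_Icc hT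
  have hlog : ∀ m, ∫ t in (0:ℝ)..T, g m t = Real.log (x T m) - Real.log (x 0 m) := fun m =>
    integral_eq_log_sub_log_of_hasDerivAt_mul hT
      ((continuous_apply m).comp_continuousOn (hx.mono Icc_subset_Ici_self))
      (fun t ht => hε.trans_le (hint t ht.1 m))
      (fun t ht => hasDerivAt_pi.1 (hode t ht.1) m) (hg m)
  have hlog_mem : ∀ t, 0 ≤ t → ∀ m, Real.log ε ≤ Real.log (x t m) ∧ Real.log (x t m) ≤ 0 :=
    fun t ht m => ⟨Real.log_le_log hε (hint t ht m), Real.log_nonpos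
      ((mem_Icc_of_mem_stdSimplex (hxs t (by linarith)) m).1)
      ((mem_Icc_of_mem_stdSimplex (hxs t (by linarith)) m).2)⟩
  have hgap : ∫ t in (0:ℝ)..T, payoffGap A i j (delayAverage μ r x t)
      = ∫ t in (0:ℝ)..T, (g i t - g j t) := by
    simp only [payoffGap_apply, g, sub_sub_sub_cancel_right]
  rw [hgap, integral_sub (hg i) (hg j), hlog, hlog, abs_le]
  obtain ⟨h1, h2⟩ := hlog_mem T hT i
  obtain ⟨h3, h4⟩ := hlog_mem T hT j
  obtain ⟨h5, h6⟩ := hlog_mem 0 le_rfl i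
  obtain ⟨h7, h8⟩ := hlog_mem 0 le_rfl j
  constructor <;> linarith

theorem tendsto_payoffGap_timeAverage {A : Matrix ι ι ℝ} {μ : Measure ℝ} [IsFiniteMeasure μ]
    {r ε : ℝ} {x : ℝ → ι → ℝ} (hr : 0 ≤ r) (hμ : μ (Icc (-r) 0) = 1)
    (hxcont : ContinuousOn x (Ici (-r))) (hxs : ∀ t : ℝ, -r ≤ t → x t ∈ stdSimplex ℝ ι)
    (hode : SolvesDelayReplicator A μ r x) (hε : 0 < ε) (hint : ∀ t : ℝ, 0 ≤ t → ∀ i, ε ≤ x t i)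
    (i j : ι) :
    Tendsto (fun T => payoffGap A i j (timeAverage x T)) atTop (𝓝 0) := by
  set L := payoffGap A i j
  have hx1 : ∀ t ∈ Ici (-r), ‖x t‖ ≤ 1 := fun t ht =>
    mem_closedBall_zero_iff.1 (stdSimplex_subset_closedBall (hxs t ht))
  have hxbar : ContinuousOn (delayAverage μ r x) (Ici 0) := continuousOn_delayAverage hxcont hx1
  have hbound : ∀ T, 0 ≤ T →
      ‖L (∫ t in (0:ℝ)..T, x t)‖ ≤ -2 * Real.log ε + ‖L‖ * (2 * 1 * r) := fun T hT => by
    have hsplit : ∫ t in (0:ℝ)..T, x t = (∫ t in (0:ℝ)..T, delayAverage μ r x t)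
        - ((∫ t in (0:ℝ)..T, delayAverage μ r x t) - ∫ t in (0:ℝ)..T, x t) := by abel
    rw [hsplit, map_sub, ← L.intervalIntegral_comp_comm
      ((hxbar.mono Icc_subset_Ici_self).intervalIntegrable_of_Icc hT)]
    exact (norm_sub_le _ _).trans (add_le_add
      (abs_integral_payoffGap_delayAverage_le hr hxcont hxs hode hε hint hT i j)
      (L.le_opNorm_of_le (norm_integral_delayAverage_sub_le hμ hxcont hx1 hT)))
  simp only [timeAverage, map_smul]
  exact tendsto_inv_atTop_zero.zero_smul_isBoundedUnder_le
    (isBoundedUnder_of_eventually_le ((eventually_ge_atTop 0).mono hbound))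

end Replicator

theorem stmt_9_general (d : ℕ) (A : Matrix (Fin d) (Fin d) ℝ) (r : ℝ) (hr : 0 ≤ r)
    (μ : Measure ℝ) [IsProbabilityMeasure μ] (hμ : μ (Set.Icc (-r) 0) = 1)
    (x : ℝ → Fin d → ℝ)
    (hxcont : ContinuousOn x (Set.Ici (-r)))
    (hxsimplex : ∀ t : ℝ, -r ≤ t → x t ∈ stdSimplex ℝ (Fin d))
    (hode : ∀ t : ℝ, 0 < t →
      HasDerivAt x
        (fun i =>
          x t i *
            (A.mulVec (∫ s in Set.Icc (-r) (0:ℝ), x (t + s) ∂μ) i -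
              ∑ k, x t k * A.mulVec (∫ s in Set.Icc (-r) (0:ℝ), x (t + s) ∂μ) k))
        t)
    (ε : ℝ) (hε : 0 < ε) (hint : ∀ t : ℝ, 0 ≤ t → ∀ i, ε ≤ x t i)
    (p : Fin d → ℝ)
    (hpuniq : ∀ q ∈ stdSimplex ℝ (Fin d),
      (∀ i, 0 < q i) → (∀ i j, A.mulVec q i = A.mulVec q j) → q = p) :
    ∀ i, Tendsto (fun T : ℝ => T⁻¹ * ∫ t in (0:ℝ)..T, x t i) atTop (nhds (p i)) := by
  have hx : ContinuousOn x (Ici 0) := hxcont.mono (Ici_subset_Ici.2 (neg_nonpos.2 hr))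
  have hxint : ∀ T, 0 ≤ T → IntervalIntegrable x volume 0 T := fun T hT =>
    (hx.mono Icc_subset_Ici_self).intervalIntegrable_of_Icc hT
  have hmem : ∀ᶠ T in atTop, timeAverage x T ∈ stdSimplex ℝ (Fin d) ∩ univ.pi fun _ => Ici ε := by
    filter_upwards [eventually_gt_atTop 0] with T hT
    exact timeAverage_mem ((convex_stdSimplex ℝ _).inter (convex_pi fun _ _ => convex_Ici ε))
      ((isClosed_stdSimplex ℝ _).inter (isClosed_set_pi fun _ _ => isClosed_Ici)) hT
      (hxint T hT.le) fun t ht => ⟨hxsimplex t (by linarith [ht.1]), fun k _ => hint t ht.1.le k⟩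
  have hY : Tendsto (timeAverage x) atTop (𝓝 p) := tendsto_of_tendsto_payoffGap hε hmem
    (tendsto_payoffGap_timeAverage hr hμ hxcont hxsimplex hode hε hint) hpuniq
  intro i
  refine (tendsto_pi_nhds.1 hY i).congr' ?_
  filter_upwards [eventually_ge_atTop 0] with T hT
  simp only [timeAverage, Pi.smul_apply, smul_eq_mul]
  exact congrArg (T⁻¹ * ·) ((ContinuousLinearMap.proj (R := ℝ) (φ := fun _ : Fin d => ℝ) i
    ).intervalIntegral_comp_comm (hxint T hT)).symm

/-- Time-averaging for the distributed-delay replicator equation: if an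
interior solution of `xᵢ'(t) = xᵢ(t)[(A x̄(t))ᵢ − ⟨x(t), A x̄(t)⟩]`, where
`x̄(t) = ∫_{−r}^0 x(t+s) dμ(s)` for a Borel probability measure `μ` on `[−r,0]`, stays
bounded away from the boundary of the simplex and `p` is the unique interior rest point of
the replicator ODE, then the time averages `(1/T)∫₀^T xᵢ(t) dt` converge to `pᵢ`. -/
theorem stmt_9 (d : ℕ) (hd : 2 ≤ d) (A : Matrix (Fin d) (Fin d) ℝ) (r : ℝ) (hr : 0 ≤ r)
    (μ : Measure ℝ) [IsProbabilityMeasure μ] (hμ : μ (Set.Icc (-r) 0) = 1)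
    (x : ℝ → Fin d → ℝ)
    (hxcont : ContinuousOn x (Set.Ici (-r)))
    (hxsimplex : ∀ t : ℝ, -r ≤ t → x t ∈ stdSimplex ℝ (Fin d))
    (hode : ∀ t : ℝ, 0 < t →
      HasDerivAt x
        (fun i =>
          x t i *
            (A.mulVec (∫ s in Set.Icc (-r) (0:ℝ), x (t + s) ∂μ) i -
              ∑ k, x t k * A.mulVec (∫ s in Set.Icc (-r) (0:ℝ), x (t + s) ∂μ) k))
        t)
    (ε : ℝ) (hε : 0 < ε) (hint : ∀ t : ℝ, 0 ≤ t → ∀ i, ε ≤ x t i)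
    (p : Fin d → ℝ) (hp : p ∈ stdSimplex ℝ (Fin d)) (hppos : ∀ i, 0 < p i)
    (hpeq : ∀ i j, A.mulVec p i = A.mulVec p j)
    (hpuniq : ∀ q ∈ stdSimplex ℝ (Fin d),
      (∀ i, 0 < q i) → (∀ i j, A.mulVec q i = A.mulVec q j) → q = p) :
    ∀ i, Tendsto (fun T : ℝ => T⁻¹ * ∫ t in (0:ℝ)..T, x t i) atTop (nhds (p i)) :=
  stmt_9_general d A r hr μ hμ x hxcont hxsimplex hode ε hε hint p hpuniq
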